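/- arXiv:1907.04644 — 5 statements merged into one kernel-verified Lean document; each statement's English description precedes it below -/
import Mathlib

section
/- Let u ∈ ℝ^n with u > 0 entrywise and ‖u‖ = 1, and set λ = λ(u) = min_i (𝒜(u)u)_i / u_i. Then 𝒜(u) − λI is a Z-matrix satisfying (𝒜(u) − λI)u ≥ 0 entrywise; moreover, if r(u,λ) ≠ 0 then 𝒜(u) − λI is a nonsingular M-matrix (it is invertible and its inverse is entrywise nonnegative), while if r(u,λ) = 0 then 𝒜(u) − λI is singular. -/
open Matrix Finset

noncomputable def enorm' {n : ℕ} (u : Fin n → ℝ) : ℝ := Real.sqrt (∑ i, u i ^ 2)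

def IsZMatrix {n : ℕ} (B : Matrix (Fin n) (Fin n) ℝ) : Prop :=
  ∀ i j, i ≠ j → B i j ≤ 0

def IsIrreducibleMat {n : ℕ} (B : Matrix (Fin n) (Fin n) ℝ) : Prop :=
  ¬ ∃ S : Finset (Fin n), S.Nonempty ∧ S ≠ Finset.univ ∧
    ∀ i ∈ S, ∀ j ∉ S, B i j = 0

def IsNonsingularM {n : ℕ} (B : Matrix (Fin n) (Fin n) ℝ) : Prop :=
  IsZMatrix B ∧ IsUnit B ∧ ∀ i j, 0 ≤ B⁻¹ i j

noncomputable def calA {n : ℕ} (A : Matrix (Fin n) (Fin n) ℝ) (Γ : ℝ) (a : Fin n → ℝ)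
    (u : Fin n → ℝ) : Matrix (Fin n) (Fin n) ℝ :=
  A + Γ • Matrix.diagonal (fun i => 1 - 1 / (a i + u i ^ 2))

noncomputable def rvec {n : ℕ} (A : Matrix (Fin n) (Fin n) ℝ) (Γ : ℝ) (a : Fin n → ℝ)
    (u : Fin n → ℝ) (lam : ℝ) : Fin n → ℝ :=
  calA A Γ a u *ᵥ u - lam • u

noncomputable def Jmat {n : ℕ} (A : Matrix (Fin n) (Fin n) ℝ) (Γ : ℝ) (a : Fin n → ℝ)
    (u : Fin n → ℝ) (lam : ℝ) : Matrix (Fin n) (Fin n) ℝ :=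
  A + (Γ - lam) • (1 : Matrix (Fin n) (Fin n) ℝ)
    - Γ • Matrix.diagonal (fun i => (a i - u i ^ 2) / (a i + u i ^ 2) ^ 2)

noncomputable def lamOf {n : ℕ} [NeZero n] (A : Matrix (Fin n) (Fin n) ℝ) (Γ : ℝ)
    (a : Fin n → ℝ) (u : Fin n → ℝ) : ℝ :=
  ⨅ i, (calA A Γ a u *ᵥ u) i / u i

def NewtonSystem {n : ℕ} (A : Matrix (Fin n) (Fin n) ℝ) (Γ : ℝ) (a : Fin n → ℝ)
    (u : Fin n → ℝ) (lam : ℝ) (Δ : Fin n → ℝ) (δ : ℝ) : Prop :=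
  Jmat A Γ a u lam *ᵥ Δ - δ • u = -rvec A Γ a u lam ∧
  -(u ⬝ᵥ Δ) = -(1/2 * (u ⬝ᵥ u - 1))

/-! `B := 𝒜(u) - λ I` has the off-diagonal entries of `A`, so it is an irreducible Z-matrix, and
the choice of `λ` makes `B u = r(u, λ) ≥ 0`. Such a `B` with `B u ≠ 0` satisfies a minimum
principle: `B x ≥ 0` forces `x ≥ 0`. Otherwise shift `x` by the multiple of `u` whose minimum
ratio to `u` is zero; on the zero set of the shifted vector the Z-sign pattern forces both `B u`
and every entry of `B` leading out of the set to vanish, so by irreducibility the set is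
everything and `B u = 0`. Monotonicity gives injectivity and nonnegative columns of `B⁻¹`.
When `B u = 0` instead, `u` is a nonzero kernel vector. -/

section MinimumPrinciple

variable {n : ℕ} {A B : Matrix (Fin n) (Fin n) ℝ}

theorem IsZMatrix.of_offDiag_eq (hA : IsZMatrix A) (h : ∀ i j, i ≠ j → B i j = A i j) :
    IsZMatrix B :=
  fun i j hij => h i j hij ▸ hA i j hij

theorem IsIrreducibleMat.of_offDiag_eq (hA : IsIrreducibleMat A)
    (h : ∀ i j, i ≠ j → B i j = A i j) : IsIrreducibleMat B := by
  rintro ⟨S, hne, hS, hzero⟩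
  refine hA ⟨S, hne, hS, fun i hi j hj => ?_⟩
  rw [← h i j (ne_of_mem_of_not_mem hi hj)]
  exact hzero i hi j hj

theorem IsIrreducibleMat.eq_univ (hB : IsIrreducibleMat B) {S : Finset (Fin n)}
    (hne : S.Nonempty) (hzero : ∀ i ∈ S, ∀ j ∉ S, B i j = 0) : S = Finset.univ := by
  by_contra hS
  exact hB ⟨S, hne, hS, hzero⟩

theorem IsZMatrix.mul_apply_nonpos (hB : IsZMatrix B) {w : Fin n → ℝ} (hw : 0 ≤ w) {i : Fin n}
    (hwi : w i = 0) (j : Fin n) : B i j * w j ≤ 0 := by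
  rcases eq_or_ne i j with rfl | hij
  · simp [hwi]
  · exact mul_nonpos_of_nonpos_of_nonneg (hB i j hij) (hw j)

theorem IsZMatrix.mulVec_apply_nonpos (hB : IsZMatrix B) {w : Fin n → ℝ} (hw : 0 ≤ w)
    {i : Fin n} (hwi : w i = 0) : (B *ᵥ w) i ≤ 0 :=
  show ∑ j, B i j * w j ≤ 0 from Finset.sum_nonpos fun j _ => hB.mul_apply_nonpos hw hwi j

theorem IsZMatrix.apply_eq_zero_of_mulVec_apply_nonneg (hB : IsZMatrix B) {w : Fin n → ℝ}
    (hw : 0 ≤ w) {i : Fin n} (hwi : w i = 0) (hBw : 0 ≤ (B *ᵥ w) i) {j : Fin n}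
    (hwj : w j ≠ 0) : B i j = 0 := by
  have hsum : ∑ k, B i k * w k = 0 := le_antisymm (hB.mulVec_apply_nonpos hw hwi) hBw
  have hterms :=
    (Finset.sum_eq_zero_iff_of_nonpos fun k _ => hB.mul_apply_nonpos hw hwi k).mp hsum
  exact (mul_eq_zero.mp (hterms j (Finset.mem_univ j))).resolve_right hwj

theorem IsZMatrix.nonneg_of_mulVec_nonneg (hB : IsZMatrix B) (hirr : IsIrreducibleMat B)
    {u : Fin n → ℝ} (hu : ∀ i, 0 < u i) (hBu : 0 ≤ B *ᵥ u) (hBu0 : B *ᵥ u ≠ 0)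
    {x : Fin n → ℝ} (hx : 0 ≤ B *ᵥ x) : 0 ≤ x := by
  by_contra hneg
  obtain ⟨i₁, hi₁⟩ : ∃ i, x i < 0 := by simpa [Pi.le_def] using hneg
  have : Nonempty (Fin n) := ⟨i₁⟩
  obtain ⟨i₀, hi₀⟩ := Finite.exists_max fun i => -x i / u i
  set c := -x i₀ / u i₀
  have hc : 0 < c := (div_pos (neg_pos.mpr hi₁) (hu i₁)).trans_le (hi₀ i₁)
  set w := x + c • u
  have hw : 0 ≤ w := fun j => by
    have := (div_le_iff₀ (hu j)).mp (hi₀ j)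
    simp only [w, Pi.add_apply, Pi.smul_apply, smul_eq_mul, Pi.zero_apply]
    linarith
  have hBw : B *ᵥ w = B *ᵥ x + c • B *ᵥ u := by rw [mulVec_add, mulVec_smul]
  set S := Finset.univ.filter fun i => w i = 0
  have hS : ∀ i ∈ S, (B *ᵥ u) i = 0 ∧ ∀ j ∉ S, B i j = 0 := by
    intro i hi
    have hwi : w i = 0 := (Finset.mem_filter.mp hi).2
    have hBxi : 0 ≤ (B *ᵥ x) i := hx i
    have hBui : 0 ≤ (B *ᵥ u) i := hBu i
    have hBwi : (B *ᵥ w) i = (B *ᵥ x) i + c * (B *ᵥ u) i := by simp [hBw]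
    have hcBu : c * (B *ᵥ u) i ≤ 0 := by
      linarith [hB.mulVec_apply_nonpos hw hwi]
    refine ⟨le_antisymm (nonpos_of_mul_nonpos_right hcBu hc) hBui, fun j hj => ?_⟩
    refine hB.apply_eq_zero_of_mulVec_apply_nonneg hw hwi ?_ (by simpa [S] using hj)
    linarith [mul_nonneg hc.le hBui]
  have hSuniv := hirr.eq_univ ⟨i₀, by simp [S, w, c, div_mul_cancel₀ _ (hu i₀).ne']⟩
    fun i hi => (hS i hi).2
  exact hBu0 (funext fun i => (hS i (hSuniv ▸ Finset.mem_univ i)).1)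

theorem IsZMatrix.isNonsingularM (hB : IsZMatrix B) (hirr : IsIrreducibleMat B)
    {u : Fin n → ℝ} (hu : ∀ i, 0 < u i) (hBu : 0 ≤ B *ᵥ u) (hBu0 : B *ᵥ u ≠ 0) :
    IsNonsingularM B := by
  have hmono {x : Fin n → ℝ} : 0 ≤ B *ᵥ x → 0 ≤ x := hB.nonneg_of_mulVec_nonneg hirr hu hBu hBu0
  have hdet : IsUnit B.det := by
    refine isUnit_iff_ne_zero.mpr fun hdet => ?_
    obtain ⟨v, hv, hBv⟩ := exists_mulVec_eq_zero_iff.mpr hdet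
    have hv_nonneg : 0 ≤ v := hmono hBv.ge
    have hv_nonpos : 0 ≤ -v := hmono (by rw [mulVec_neg, hBv, neg_zero])
    exact hv (le_antisymm (neg_nonneg.mp hv_nonpos) hv_nonneg)
  refine ⟨hB, (isUnit_iff_isUnit_det B).mpr hdet, fun i j => ?_⟩
  have hcol : B *ᵥ (B⁻¹ *ᵥ Pi.single j 1) = Pi.single j 1 := by
    rw [mulVec_mulVec, mul_nonsing_inv B hdet, one_mulVec]
  have := hmono (hcol ▸ Pi.single_nonneg.mpr zero_le_one) i
  rwa [mulVec_single_one] at this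

end MinimumPrinciple

section RayleighQuotientShift

variable {n : ℕ} (A : Matrix (Fin n) (Fin n) ℝ) (Γ : ℝ) (a u : Fin n → ℝ)

theorem calA_sub_smul_one_apply_of_ne (lam : ℝ) (i j : Fin n) (hij : i ≠ j) :
    (calA A Γ a u - lam • (1 : Matrix (Fin n) (Fin n) ℝ)) i j = A i j := by
  simp [calA, diagonal_apply_ne _ hij, one_apply_ne hij]

theorem calA_sub_smul_one_mulVec (lam : ℝ) :
    (calA A Γ a u - lam • (1 : Matrix (Fin n) (Fin n) ℝ)) *ᵥ u = rvec A Γ a u lam := by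
  rw [sub_mulVec, smul_mulVec, one_mulVec, rvec]

theorem rvec_lamOf_nonneg [NeZero n] {u : Fin n → ℝ} (hu : ∀ i, 0 < u i) :
    0 ≤ rvec A Γ a u (lamOf A Γ a u) := fun i => by
  have hle : lamOf A Γ a u ≤ (calA A Γ a u *ᵥ u) i / u i :=
    ciInf_le (Set.finite_range _).bddBelow i
  have := (le_div_iff₀ (hu i)).mp hle
  simp only [rvec, Pi.sub_apply, Pi.smul_apply, smul_eq_mul, Pi.zero_apply]
  linarith

end RayleighQuotientShift

theorem stmt_0_general {n : ℕ} [NeZero n] (A : Matrix (Fin n) (Fin n) ℝ) (a : Fin n → ℝ) (Γ : ℝ)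
    (hA : IsNonsingularM A) (hAirr : IsIrreducibleMat A)
    (u : Fin n → ℝ) (hu : ∀ i, 0 < u i) :
    IsZMatrix (calA A Γ a u - lamOf A Γ a u • (1 : Matrix (Fin n) (Fin n) ℝ)) ∧
    (∀ i, 0 ≤ ((calA A Γ a u - lamOf A Γ a u • (1 : Matrix (Fin n) (Fin n) ℝ)) *ᵥ u) i) ∧
    (rvec A Γ a u (lamOf A Γ a u) ≠ 0 →
      IsUnit (calA A Γ a u - lamOf A Γ a u • (1 : Matrix (Fin n) (Fin n) ℝ)) ∧
      ∀ i j, 0 ≤ (calA A Γ a u - lamOf A Γ a u • (1 : Matrix (Fin n) (Fin n) ℝ))⁻¹ i j) ∧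
    (rvec A Γ a u (lamOf A Γ a u) = 0 →
      ¬ IsUnit (calA A Γ a u - lamOf A Γ a u • (1 : Matrix (Fin n) (Fin n) ℝ))) := by
  set B := calA A Γ a u - lamOf A Γ a u • (1 : Matrix (Fin n) (Fin n) ℝ)
  have hoff := calA_sub_smul_one_apply_of_ne A Γ a u (lamOf A Γ a u)
  have hZ : IsZMatrix B := hA.1.of_offDiag_eq hoff
  have hBu : B *ᵥ u = rvec A Γ a u (lamOf A Γ a u) := calA_sub_smul_one_mulVec A Γ a u _
  have hBu_nonneg : 0 ≤ B *ᵥ u := hBu ▸ rvec_lamOf_nonneg A Γ a hu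
  refine ⟨hZ, hBu_nonneg, fun hr => ?_, fun hr => ?_⟩
  · exact (hZ.isNonsingularM (hAirr.of_offDiag_eq hoff) hu hBu_nonneg (hBu ▸ hr)).2
  · rw [isUnit_iff_isUnit_det, isUnit_iff_ne_zero, not_not]
    exact exists_mulVec_eq_zero_iff.mp
      ⟨u, fun h => (hu 0).ne' (congrFun h 0), hBu.trans hr⟩

theorem stmt_0 {n : ℕ} [NeZero n] (A : Matrix (Fin n) (Fin n) ℝ) (a : Fin n → ℝ) (Γ : ℝ)
    (ha : ∀ i, 0 < a i) (hΓ : 0 < Γ)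
    (hA : IsNonsingularM A) (hAirr : IsIrreducibleMat A)
    (u : Fin n → ℝ) (hu : ∀ i, 0 < u i) (hnorm : enorm' u = 1) :
    IsZMatrix (calA A Γ a u - lamOf A Γ a u • (1 : Matrix (Fin n) (Fin n) ℝ)) ∧
    (∀ i, 0 ≤ ((calA A Γ a u - lamOf A Γ a u • (1 : Matrix (Fin n) (Fin n) ℝ)) *ᵥ u) i) ∧
    (rvec A Γ a u (lamOf A Γ a u) ≠ 0 →
      IsUnit (calA A Γ a u - lamOf A Γ a u • (1 : Matrix (Fin n) (Fin n) ℝ)) ∧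
      ∀ i j, 0 ≤ (calA A Γ a u - lamOf A Γ a u • (1 : Matrix (Fin n) (Fin n) ℝ))⁻¹ i j) ∧
    (rvec A Γ a u (lamOf A Γ a u) = 0 →
      ¬ IsUnit (calA A Γ a u - lamOf A Γ a u • (1 : Matrix (Fin n) (Fin n) ℝ))) :=
  stmt_0_general A a Γ hA hAirr u hu
end

section
/- Let u ∈ ℝ^n with u > 0 entrywise and λ ∈ ℝ be such that r(u,λ) ≥ 0 entrywise. Then J(u,λ) is a Z-matrix with J(u,λ)u > 0 entrywise, J(u,λ) is invertible, its inverse is entrywise nonnegative, and in fact every entry of J(u,λ)^{-1} is strictly positive. -/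
open Matrix Finset

noncomputable def enorm {n : ℕ} (u : Fin n → ℝ) : ℝ := Real.sqrt (∑ i, u i ^ 2)

/-- Monotonicity: if `B` is a Z-matrix with `B *ᵥ u > 0` for some `u > 0`, then
`B *ᵥ x ≥ 0` implies `x ≥ 0`. -/
lemma zmat_mono {n : ℕ} {B : Matrix (Fin n) (Fin n) ℝ} {u : Fin n → ℝ}
    (hZ : IsZMatrix B) (hu : ∀ i, 0 < u i) (hBu : ∀ i, 0 < (B *ᵥ u) i)
    {x : Fin n → ℝ} (hx : ∀ i, 0 ≤ (B *ᵥ x) i) : ∀ i, 0 ≤ x i := by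
  intro i
  obtain ⟨i0, -, hi0⟩ :=
    Finset.exists_min_image Finset.univ (fun j => x j / u j) ⟨i, Finset.mem_univ i⟩
  set t := x i0 / u i0 with ht
  have hti : t ≤ x i / u i := hi0 i (Finset.mem_univ i)
  have htnn : 0 ≤ t := by
    by_contra h
    push_neg at h
    have key : (B *ᵥ x) i0 ≤ t * (B *ᵥ u) i0 := by
      simp only [Matrix.mulVec, dotProduct]
      rw [Finset.mul_sum]
      refine Finset.sum_le_sum fun j _ => ?_
      rcases eq_or_ne j i0 with rfl | hj
      · have : x j = t * u j := by
          rw [ht]; exact (div_mul_cancel₀ (x j) (hu j).ne').symm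
        rw [this]; ring_nf; exact le_refl _
      · have h1 : t ≤ x j / u j := hi0 j (Finset.mem_univ j)
        have h2 : t * u j ≤ x j := by
          rw [← div_mul_cancel₀ (x j) (hu j).ne']
          exact mul_le_mul_of_nonneg_right h1 (hu j).le
        have h3 : B i0 j ≤ 0 := hZ i0 j (Ne.symm hj)
        calc B i0 j * x j ≤ B i0 j * (t * u j) := mul_le_mul_of_nonpos_left h2 h3
          _ = t * (B i0 j * u j) := by ring
    have : (B *ᵥ x) i0 < 0 := lt_of_le_of_lt key (mul_neg_of_neg_of_pos h (hBu i0))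
    exact absurd (hx i0) (not_le.mpr this)
  have : 0 ≤ x i / u i := le_trans htnn hti
  have := mul_nonneg this (hu i).le
  rwa [div_mul_cancel₀ (x i) (hu i).ne'] at this

lemma zmat_isUnit {n : ℕ} {B : Matrix (Fin n) (Fin n) ℝ} {u : Fin n → ℝ}
    (hZ : IsZMatrix B) (hu : ∀ i, 0 < u i) (hBu : ∀ i, 0 < (B *ᵥ u) i) : IsUnit B := by
  rw [← Matrix.mulVec_injective_iff_isUnit]
  intro x y hxy
  have h0 : B *ᵥ (x - y) = 0 := by
    rw [Matrix.mulVec_sub, hxy, sub_self]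
  have h1 : ∀ i, 0 ≤ (x - y) i :=
    zmat_mono hZ hu hBu (fun i => by rw [h0]; exact le_refl _)
  have h2 : ∀ i, 0 ≤ (y - x) i := by
    refine zmat_mono hZ hu hBu (x := y - x) (fun i => ?_)
    have : B *ᵥ (y - x) = 0 := by rw [Matrix.mulVec_sub, hxy, sub_self]
    simp [this]
  funext i
  have := le_antisymm (by linarith [h2 i, Pi.sub_apply y x i, Pi.sub_apply x y i] :
    x i ≤ y i) (by have := h1 i; simp only [Pi.sub_apply] at this; linarith)
  exact this

lemma zmat_inv_nonneg {n : ℕ} {B : Matrix (Fin n) (Fin n) ℝ} {u : Fin n → ℝ}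
    (hZ : IsZMatrix B) (hu : ∀ i, 0 < u i) (hBu : ∀ i, 0 < (B *ᵥ u) i) :
    ∀ i j, 0 ≤ B⁻¹ i j := by
  intro i j
  have hunit := zmat_isUnit hZ hu hBu
  have hBB : B * B⁻¹ = 1 := Matrix.mul_nonsing_inv B (Matrix.isUnit_iff_isUnit_det B |>.mp hunit)
  have hcol : B *ᵥ (fun k => B⁻¹ k j) = fun k => (1 : Matrix (Fin n) (Fin n) ℝ) k j := by
    funext k
    have : (B * B⁻¹) k j = (1 : Matrix (Fin n) (Fin n) ℝ) k j := by rw [hBB]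
    simpa [Matrix.mul_apply, Matrix.mulVec, dotProduct] using this
  refine zmat_mono hZ hu hBu (x := fun k => B⁻¹ k j) (fun k => ?_) i
  rw [hcol]
  rcases eq_or_ne k j with rfl | h
  · simp
  · simp [Matrix.one_apply_ne h]

lemma zmat_inv_pos {n : ℕ} {B : Matrix (Fin n) (Fin n) ℝ} {u : Fin n → ℝ}
    (hZ : IsZMatrix B) (hu : ∀ i, 0 < u i) (hBu : ∀ i, 0 < (B *ᵥ u) i)
    (hirr : IsIrreducibleMat B) : ∀ i j, 0 < B⁻¹ i j := by
  intro i j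
  have hnn := zmat_inv_nonneg hZ hu hBu
  rcases lt_or_eq_of_le (hnn i j) with h | h
  · exact h
  exfalso
  -- x is the j-th column of B⁻¹ ; B *ᵥ x = e_j
  set x : Fin n → ℝ := fun k => B⁻¹ k j with hx
  have hunit := zmat_isUnit hZ hu hBu
  have hBB : B * B⁻¹ = 1 := Matrix.mul_nonsing_inv B (Matrix.isUnit_iff_isUnit_det B |>.mp hunit)
  have hcol : ∀ k, (B *ᵥ x) k = (1 : Matrix (Fin n) (Fin n) ℝ) k j := by
    intro k
    have : (B * B⁻¹) k j = (1 : Matrix (Fin n) (Fin n) ℝ) k j := by rw [hBB]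
    simpa [hx, Matrix.mul_apply, Matrix.mulVec, dotProduct] using this
  classical
  set S : Finset (Fin n) := Finset.univ.filter (fun k => x k = 0) with hS
  have hiS : i ∈ S := by simp [hS, hx, ← h]
  have hSne : S.Nonempty := ⟨i, hiS⟩
  have hSuniv : S ≠ Finset.univ := by
    intro hcontra
    have hxz : ∀ k, x k = 0 := by
      intro k
      have : k ∈ S := hcontra ▸ Finset.mem_univ k
      simpa [hS] using this
    have : (B *ᵥ x) j = 1 := by rw [hcol j]; simp
    have hz : (B *ᵥ x) j = 0 := by
      simp only [Matrix.mulVec, dotProduct]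
      exact Finset.sum_eq_zero fun k _ => by rw [hxz k, mul_zero]
    rw [hz] at this; norm_num at this
  refine hirr ⟨S, hSne, hSuniv, ?_⟩
  intro p hp q hq
  -- for p ∈ S : 0 ≤ (B *ᵥ x) p = ∑_{k∉S} B p k * x k, each term ≤ 0
  have hxS : ∀ k ∈ S, x k = 0 := fun k hk => by simpa [hS] using hk
  have hxpos : ∀ k ∉ S, 0 < x k := by
    intro k hk
    rcases lt_or_eq_of_le (hnn k j) with h' | h'
    · exact h'
    · exact absurd (by simp [hS, hx, ← h']) hk
  have hsplit : (B *ᵥ x) p = ∑ k ∈ Finset.univ.filter (fun k => k ∉ S), B p k * x k := by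
    simp only [Matrix.mulVec, dotProduct]
    rw [← Finset.sum_filter_add_sum_filter_not Finset.univ (fun k => k ∈ S)]
    have : ∑ k ∈ Finset.univ.filter (fun k => k ∈ S), B p k * x k = 0 :=
      Finset.sum_eq_zero fun k hk => by
        rw [hxS k (Finset.mem_filter.mp hk).2, mul_zero]
    rw [this, zero_add]
  have hterm : ∀ k ∈ Finset.univ.filter (fun k => k ∉ S), B p k * x k ≤ 0 := by
    intro k hk
    have hkS : k ∉ S := (Finset.mem_filter.mp hk).2
    have hne : p ≠ k := fun hc => hkS (hc ▸ hp)
    exact mul_nonpos_of_nonpos_of_nonneg (hZ p k hne) (hxpos k hkS).le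
  have hge : 0 ≤ (B *ᵥ x) p := by
    rw [hcol p]
    rcases eq_or_ne p j with rfl | hpj
    · simp
    · simp [Matrix.one_apply_ne hpj]
  have hsum0 : ∑ k ∈ Finset.univ.filter (fun k => k ∉ S), B p k * x k = 0 :=
    le_antisymm (Finset.sum_nonpos hterm) (hsplit ▸ hge)
  have heach := (Finset.sum_eq_zero_iff_of_nonpos hterm).mp hsum0
  have hq' : q ∈ Finset.univ.filter (fun k => k ∉ S) := by simp [hq]
  have := heach q hq'
  rcases mul_eq_zero.mp this with h' | h'
  · exact h'
  · exact absurd h' (hxpos q hq).ne'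

theorem stmt_1 {n : ℕ} (A : Matrix (Fin n) (Fin n) ℝ) (a : Fin n → ℝ) (Γ : ℝ)
    (ha : ∀ i, 0 < a i) (hΓ : 0 < Γ)
    (hA : IsNonsingularM A) (hAirr : IsIrreducibleMat A)
    (u : Fin n → ℝ) (hu : ∀ i, 0 < u i) (lam : ℝ)
    (hr : ∀ i, 0 ≤ rvec A Γ a u lam i) :
    IsZMatrix (Jmat A Γ a u lam) ∧
    (∀ i, 0 < (Jmat A Γ a u lam *ᵥ u) i) ∧
    IsUnit (Jmat A Γ a u lam) ∧
    (∀ i j, 0 ≤ (Jmat A Γ a u lam)⁻¹ i j) ∧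
    (∀ i j, 0 < (Jmat A Γ a u lam)⁻¹ i j) := by
  have hZA : IsZMatrix A := hA.1
  have hden : ∀ i, (0:ℝ) < a i + u i ^ 2 := fun i =>
    add_pos (ha i) (pow_pos (hu i) 2)
  -- off-diagonal entries of J coincide with those of A
  have hoff : ∀ i j, i ≠ j → Jmat A Γ a u lam i j = A i j := by
    intro i j hij
    simp [Jmat, Matrix.add_apply, Matrix.sub_apply, Matrix.smul_apply,
      Matrix.one_apply_ne hij, Matrix.diagonal_apply_ne _ hij]
  have hZ : IsZMatrix (Jmat A Γ a u lam) := fun i j hij => (hoff i j hij) ▸ hZA i j hij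
  -- J *ᵥ u is entrywise positive
  have hJu : ∀ i, 0 < (Jmat A Γ a u lam *ᵥ u) i := by
    intro i
    have hkey : (Jmat A Γ a u lam *ᵥ u) i
        = rvec A Γ a u lam i + Γ * u i * (2 * u i ^ 2 / (a i + u i ^ 2) ^ 2) := by
      simp only [Jmat, rvec, calA, Matrix.sub_mulVec, Matrix.add_mulVec,
        Matrix.smul_mulVec, Matrix.one_mulVec, Pi.add_apply, Pi.sub_apply,
        Pi.smul_apply, smul_eq_mul, Matrix.mulVec_diagonal]
      have h := (hden i).ne'
      field_simp
      ring
    rw [hkey]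
    have hpos : 0 < Γ * u i * (2 * u i ^ 2 / (a i + u i ^ 2) ^ 2) := by
      apply mul_pos (mul_pos hΓ (hu i))
      exact div_pos (mul_pos two_pos (pow_pos (hu i) 2)) (pow_pos (hden i) 2)
    linarith [hr i]
  have hirrJ : IsIrreducibleMat (Jmat A Γ a u lam) := by
    intro ⟨S, hne, hnu, hzero⟩
    refine hAirr ⟨S, hne, hnu, fun i hi j hj => ?_⟩
    have hij : i ≠ j := fun hc => hj (hc ▸ hi)
    rw [← hoff i j hij]
    exact hzero i hi j hj
  exact ⟨hZ, hJu, zmat_isUnit hZ hu hJu, zmat_inv_nonneg hZ hu hJu,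
    zmat_inv_pos hZ hu hJu hirrJ⟩
end

section
/- Suppose λ ∈ ℝ and u ∈ ℝ^n with u > 0 entrywise, ‖u‖ = 1, and r(u,λ) ≥ 0 entrywise. Then (1/2)(1 + u^T u) − Γ · u^T J(u,λ)^{-1} · diag(2u_i²/(a_i + u_i²)²) · u ≥ 0, and equality holds if and only if r(u,λ) = 0. -/
/-! `J(u, λ)` has nonpositive off-diagonal entries and `J u = r + Γ w` with
`w = diag(2uᵢ² / (aᵢ + uᵢ²)²) u > 0`, so for `r ≥ 0` the positive vector `u` makes `J` a
nonsingular M-matrix: `J x ≥ 0` forces `x ≥ 0`. Hence `x := J⁻¹ r ≥ 0` and `Γ J⁻¹ w = u - x`,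
so with `uᵀu = 1` the quantity equals `uᵀx`, which is nonnegative and vanishes iff `x = 0`,
i.e. iff `r = 0`. -/

open Matrix Finset

namespace Matrix

section SemipositiveZMatrix

variable {ι : Type*} [Fintype ι] {B : Matrix ι ι ℝ} {u : ι → ℝ}

/- If `x` had a negative entry, shift it by the least `t • u` making it nonnegative: the shifted
vector vanishes at some `i₀`, so the Z-sign pattern forces `(B *ᵥ (x + t • u)) i₀ ≤ 0`, while
`B *ᵥ x ≥ 0` and `B *ᵥ u > 0` force it to be positive. -/
theorem nonneg_of_mulVec_nonneg_of_offDiag_nonpos (hB : ∀ i j, i ≠ j → B i j ≤ 0)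
    (hu : ∀ i, 0 < u i) (hBu : ∀ i, 0 < (B *ᵥ u) i) {x : ι → ℝ} (hx : 0 ≤ B *ᵥ x) :
    0 ≤ x := by
  by_contra hneg
  obtain ⟨k, hk⟩ : ∃ k, x k < 0 := by simpa [Pi.le_def] using hneg
  obtain ⟨i₀, -, hi₀⟩ := exists_max_image univ (fun i => -x i / u i) ⟨k, mem_univ k⟩
  set t := -x i₀ / u i₀
  have ht : 0 < t := (div_pos (by linarith) (hu k)).trans_le (hi₀ k (mem_univ k))
  set y := x + t • u
  have hy : ∀ i, 0 ≤ y i := fun i => by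
    have := (div_le_iff₀ (hu i)).1 (hi₀ i (mem_univ i))
    simp only [y, Pi.add_apply, Pi.smul_apply, smul_eq_mul]
    linarith
  have hyi₀ : y i₀ = 0 := by
    simp only [y, Pi.add_apply, Pi.smul_apply, smul_eq_mul, t, div_mul_cancel₀ _ (hu i₀).ne']
    ring
  have hpos : 0 < (B *ᵥ y) i₀ := by
    simp only [y, mulVec_add, mulVec_smul, Pi.add_apply, Pi.smul_apply, smul_eq_mul]
    have hxi₀ : 0 ≤ (B *ᵥ x) i₀ := hx i₀
    linarith [mul_pos ht (hBu i₀)]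
  have hnonpos : (B *ᵥ y) i₀ ≤ 0 := by
    refine sum_nonpos fun j _ => ?_
    rcases eq_or_ne j i₀ with rfl | hj
    · simp [hyi₀]
    · exact mul_nonpos_of_nonpos_of_nonneg (hB i₀ j hj.symm) (hy j)
  linarith

variable [DecidableEq ι]

theorem isUnit_of_offDiag_nonpos_of_mulVec_pos (hB : ∀ i j, i ≠ j → B i j ≤ 0)
    (hu : ∀ i, 0 < u i) (hBu : ∀ i, 0 < (B *ᵥ u) i) : IsUnit B := by
  rw [isUnit_iff_isUnit_det, isUnit_iff_ne_zero, ne_eq, ← exists_mulVec_eq_zero_iff]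
  rintro ⟨v, hv, hBv⟩
  have hv₀ := nonneg_of_mulVec_nonneg_of_offDiag_nonpos hB hu hBu (x := v) hBv.ge
  have hnegv := nonneg_of_mulVec_nonneg_of_offDiag_nonpos hB hu hBu (x := -v)
    (by rw [mulVec_neg, hBv, neg_zero])
  exact hv (le_antisymm (neg_nonneg.1 hnegv) hv₀)

theorem inv_mulVec_nonneg_of_offDiag_nonpos (hB : ∀ i j, i ≠ j → B i j ≤ 0)
    (hu : ∀ i, 0 < u i) (hBu : ∀ i, 0 < (B *ᵥ u) i) {r : ι → ℝ} (hr : 0 ≤ r) :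
    0 ≤ B⁻¹ *ᵥ r := by
  have hdet := (isUnit_iff_isUnit_det B).1 (isUnit_of_offDiag_nonpos_of_mulVec_pos hB hu hBu)
  refine nonneg_of_mulVec_nonneg_of_offDiag_nonpos hB hu hBu ?_
  rwa [mulVec_mulVec, mul_nonsing_inv _ hdet, one_mulVec]

end SemipositiveZMatrix

theorem dotProduct_eq_zero_iff_of_pos_of_nonneg {ι : Type*} [Fintype ι] {u x : ι → ℝ}
    (hu : ∀ i, 0 < u i) (hx : 0 ≤ x) : u ⬝ᵥ x = 0 ↔ x = 0 := by
  refine ⟨fun h => funext fun i => ?_, fun h => h ▸ dotProduct_zero u⟩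
  have := (sum_eq_zero_iff_of_nonneg fun j _ => mul_nonneg (hu j).le (hx j)).1 h i (mem_univ i)
  exact (mul_eq_zero.1 this).resolve_left (hu i).ne'

end Matrix

theorem dotProduct_self_eq_one_of_enorm_eq_one {n : ℕ} {u : Fin n → ℝ} (hu : _root_.enorm u = 1) :
    u ⬝ᵥ u = 1 := by
  rw [_root_.enorm, Real.sqrt_eq_one] at hu
  simpa [dotProduct, sq] using hu

theorem isZMatrix_Jmat {n : ℕ} {A : Matrix (Fin n) (Fin n) ℝ} (hA : IsZMatrix A) (Γ : ℝ)
    (a u : Fin n → ℝ) (lam : ℝ) : IsZMatrix (Jmat A Γ a u lam) := fun i j hij => by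
  simpa [Jmat, one_apply_ne hij, diagonal_apply_ne _ hij] using hA i j hij

/- `J(u, λ)` is the Jacobian of `u ↦ 𝒜(u) u - λ u`; the derivative of the nonlinearity
`u ↦ (1 - 1 / (a + u²)) u` is `(1 - 1 / (a + u²)) + 2 u² / (a + u²)²`. -/
theorem Jmat_eq_calA_sub_add {n : ℕ} (A : Matrix (Fin n) (Fin n) ℝ) (Γ : ℝ) {a u : Fin n → ℝ}
    (hau : ∀ i, a i + u i ^ 2 ≠ 0) (lam : ℝ) :
    Jmat A Γ a u lam = calA A Γ a u - lam • 1
      + Γ • diagonal (fun i => 2 * u i ^ 2 / (a i + u i ^ 2) ^ 2) := by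
  have hdiag : ∀ i, 1 - (a i - u i ^ 2) / (a i + u i ^ 2) ^ 2
      = (1 - 1 / (a i + u i ^ 2)) + 2 * u i ^ 2 / (a i + u i ^ 2) ^ 2 := fun i => by
    field_simp [hau i]
    ring
  ext i j
  rcases eq_or_ne i j with rfl | hij
  · simp only [Jmat, calA, Matrix.add_apply, Matrix.sub_apply, Matrix.smul_apply, one_apply_eq,
      diagonal_apply_eq, smul_eq_mul]
    linear_combination Γ * hdiag i
  · simp [Jmat, calA, one_apply_ne hij, diagonal_apply_ne _ hij]

theorem Jmat_mulVec_self {n : ℕ} (A : Matrix (Fin n) (Fin n) ℝ) (Γ : ℝ) {a u : Fin n → ℝ}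
    (hau : ∀ i, a i + u i ^ 2 ≠ 0) (lam : ℝ) :
    Jmat A Γ a u lam *ᵥ u
      = rvec A Γ a u lam + Γ • fun i => 2 * u i ^ 2 / (a i + u i ^ 2) ^ 2 * u i := by
  rw [Jmat_eq_calA_sub_add A Γ hau, add_mulVec, sub_mulVec, smul_mulVec, smul_mulVec,
    one_mulVec, rvec]
  congr 2
  ext i
  simp [mulVec_diagonal]

theorem stmt_3_general {n : ℕ} (A : Matrix (Fin n) (Fin n) ℝ) (a : Fin n → ℝ) (Γ : ℝ)
    (ha : ∀ i, 0 < a i) (hΓ : 0 < Γ)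
    (hA : IsNonsingularM A)
    (u : Fin n → ℝ) (hu : ∀ i, 0 < u i) (hnorm : _root_.enorm u = 1) (lam : ℝ)
    (hr : ∀ i, 0 ≤ rvec A Γ a u lam i) :
    0 ≤ 1/2 * (1 + u ⬝ᵥ u) -
        Γ * (u ⬝ᵥ ((Jmat A Γ a u lam)⁻¹ *ᵥ fun i => 2 * u i ^ 2 / (a i + u i ^ 2) ^ 2 * u i)) ∧
    (1/2 * (1 + u ⬝ᵥ u) -
        Γ * (u ⬝ᵥ ((Jmat A Γ a u lam)⁻¹ *ᵥ fun i => 2 * u i ^ 2 / (a i + u i ^ 2) ^ 2 * u i)) = 0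
      ↔ rvec A Γ a u lam = 0) := by
  set J := Jmat A Γ a u lam
  set r := rvec A Γ a u lam
  set w : Fin n → ℝ := fun i => 2 * u i ^ 2 / (a i + u i ^ 2) ^ 2 * u i
  have hden : ∀ i, 0 < a i + u i ^ 2 := fun i => by have := ha i; positivity
  have hJu : J *ᵥ u = r + Γ • w := Jmat_mulVec_self A Γ (fun i => (hden i).ne') lam
  have hJZ := isZMatrix_Jmat hA.1 Γ a u lam
  have hJupos : ∀ i, 0 < (J *ᵥ u) i := fun i => by
    have hwi : 0 < w i := by have := hu i; have := hden i; positivity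
    rw [hJu]
    exact add_pos_of_nonneg_of_pos (hr i) (mul_pos hΓ hwi)
  have hJ : IsUnit J := isUnit_of_offDiag_nonpos_of_mulVec_pos hJZ hu hJupos
  have hx : 0 ≤ J⁻¹ *ᵥ r := inv_mulVec_nonneg_of_offDiag_nonpos hJZ hu hJupos hr
  have hΓw : Γ • (J⁻¹ *ᵥ w) = u - J⁻¹ *ᵥ r := by
    rw [eq_sub_iff_add_eq', ← mulVec_smul, ← mulVec_add, ← hJu, mulVec_mulVec,
      nonsing_inv_mul _ ((isUnit_iff_isUnit_det J).1 hJ), one_mulVec]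
  have hQ : 1/2 * (1 + u ⬝ᵥ u) - Γ * (u ⬝ᵥ (J⁻¹ *ᵥ w)) = u ⬝ᵥ (J⁻¹ *ᵥ r) := by
    rw [← smul_eq_mul Γ, ← dotProduct_smul, hΓw, dotProduct_sub,
      dotProduct_self_eq_one_of_enorm_eq_one hnorm]
    ring
  rw [hQ, dotProduct_eq_zero_iff_of_pos_of_nonneg hu hx]
  exact ⟨dotProduct_nonneg_of_nonneg (fun i => (hu i).le) hx,
    (mulVec_injective_of_isUnit (isUnit_nonsing_inv_iff.2 hJ)).eq_iff' (mulVec_zero _)⟩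

theorem stmt_3 {n : ℕ} (A : Matrix (Fin n) (Fin n) ℝ) (a : Fin n → ℝ) (Γ : ℝ)
    (ha : ∀ i, 0 < a i) (hΓ : 0 < Γ)
    (hA : IsNonsingularM A) (hAirr : IsIrreducibleMat A)
    (u : Fin n → ℝ) (hu : ∀ i, 0 < u i) (hnorm : _root_.enorm u = 1) (lam : ℝ)
    (hr : ∀ i, 0 ≤ rvec A Γ a u lam i) :
    0 ≤ 1/2 * (1 + u ⬝ᵥ u) -
        Γ * (u ⬝ᵥ ((Jmat A Γ a u lam)⁻¹ *ᵥ fun i => 2 * u i ^ 2 / (a i + u i ^ 2) ^ 2 * u i)) ∧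
    (1/2 * (1 + u ⬝ᵥ u) -
        Γ * (u ⬝ᵥ ((Jmat A Γ a u lam)⁻¹ *ᵥ fun i => 2 * u i ^ 2 / (a i + u i ^ 2) ^ 2 * u i)) = 0
      ↔ rvec A Γ a u lam = 0) :=
  stmt_3_general A a Γ ha hΓ hA u hu hnorm lam hr
end

section
/- There exists a constant M > 0, depending only on n, a, and Γ, with the following property: for every u ∈ ℝ^n with u > 0 entrywise and ‖u‖ = 1, every λ ∈ ℝ, every (Δ, δ) solving the Newton system at (u,λ), and every θ ∈ (0,1], writing w = u + θΔ and u' = w/‖w‖ (assuming w ≠ 0), one has ‖ r(u',λ) − ((1−θ)/‖w‖)·r(u,λ) − (θδ/‖w‖)·u ‖ ≤ M·θ²·‖Δ‖². Moreover, if additionally u' > 0 entrywise, then λ(u') − λ(u) = min_i (r(u', λ(u)))_i / u'_i. -/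
open Matrix Finset

noncomputable def euclNorm {n : ℕ} (u : Fin n → ℝ) : ℝ := Real.sqrt (∑ i, u i ^ 2)

noncomputable def wvec {n : ℕ} (u Δ : Fin n → ℝ) (θ : ℝ) : Fin n → ℝ := u + θ • Δ

noncomputable def unext {n : ℕ} (u Δ : Fin n → ℝ) (θ : ℝ) : Fin n → ℝ :=
  (euclNorm (wvec u Δ θ))⁻¹ • wvec u Δ θ

/-!
With `quotSq a x = x / (a + x ^ 2)` one has `𝒜(u)u = Au + Γu - Γ quotSq(u)` componentwise, and
`J(u,λ)` is the linearisation of `r(·,λ)` at `u`. For `w = u + θΔ` and `s = ‖w‖`, the Newton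
equation cancels `A` and `λ` from `r(w/s, λ) - (1-θ)/s r(u,λ) - θδ/s u`, leaving componentwise
`-Γ (quotSq(w/s) - quotSq(w)/s) - Γ/s (quotSq(u+θΔ) - quotSq(u) - quotSq'(u) θΔ)`,
a normalisation error plus a Taylor remainder. The second Newton equation gives `u ⟂ Δ`, so
`s² = 1 + θ²‖Δ‖²`, and both terms are `O(θ²‖Δ‖²)` with constants depending only on `a`.
The identity for `λ` says that a minimum commutes with subtracting a constant.
-/
noncomputable def quotSq (a x : ℝ) : ℝ := x / (a + x ^ 2)

lemma abs_mul_two_sqrt_le (a x : ℝ) (ha : 0 ≤ a) : |x| * (2 * √a) ≤ a + x ^ 2 := by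
  nlinarith [sq_nonneg (|x| - √a), sq_abs x, Real.sq_sqrt ha]

lemma abs_quotSq_add_sub_sub_le {a : ℝ} (ha : 0 < a) (u h : ℝ) :
    |quotSq a (u + h) - quotSq a u - h * ((a - u ^ 2) / (a + u ^ 2) ^ 2)|
      ≤ 3 / (a * √a) * h ^ 2 := by
  set X := a + (u + h) ^ 2
  set Y := a + u ^ 2
  have hX : 0 < X := by positivity
  have hY : 0 < Y := by positivity
  have hb : 0 ≤ √a := Real.sqrt_nonneg a
  have hremainder : quotSq a (u + h) - quotSq a u - h * ((a - u ^ 2) / Y ^ 2)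
      = h ^ 2 * ((u ^ 2 - a) * h + u * (u ^ 2 - 3 * a)) / (X * Y ^ 2) := by
    unfold quotSq; field_simp; ring
  have hu := abs_mul_two_sqrt_le a u ha.le
  have hh : |h| * (2 * √a) ≤ X + Y := by
    have := abs_mul_two_sqrt_le a (u + h) ha.le
    have : |h| ≤ |u + h| + |u| := by simpa using abs_sub (u + h) u
    nlinarith
  have hnum :
      |(u ^ 2 - a) * h + u * (u ^ 2 - 3 * a)| * (2 * √a) ≤ Y * (X + Y) + 3 * Y * Y := by
    have e1 : |u ^ 2 - a| ≤ Y := abs_le.mpr ⟨by nlinarith, by nlinarith⟩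
    have e2 : |u ^ 2 - 3 * a| ≤ 3 * Y := abs_le.mpr ⟨by nlinarith, by nlinarith⟩
    calc |(u ^ 2 - a) * h + u * (u ^ 2 - 3 * a)| * (2 * √a)
        ≤ |u ^ 2 - a| * (|h| * (2 * √a)) + |u ^ 2 - 3 * a| * (|u| * (2 * √a)) := by
          have := abs_add_le ((u ^ 2 - a) * h) (u * (u ^ 2 - 3 * a))
          rw [abs_mul, abs_mul] at this
          nlinarith
      _ ≤ Y * (X + Y) + 3 * Y * Y := by gcongr
  have hXY : a * (Y * (X + Y) + 3 * Y * Y) ≤ 5 * (X * Y ^ 2) := by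
    have : a ≤ X := le_add_of_nonneg_right (sq_nonneg _)
    have : a ≤ Y := le_add_of_nonneg_right (sq_nonneg _)
    nlinarith [mul_le_mul_of_nonneg_left ‹a ≤ Y› (mul_nonneg hX.le hY.le),
      mul_le_mul_of_nonneg_left ‹a ≤ X› (sq_nonneg Y)]
  have hden : 0 < X * Y ^ 2 := mul_pos hX (pow_pos hY 2)
  have hnum' : |(u ^ 2 - a) * h + u * (u ^ 2 - 3 * a)| * (a * √a) ≤ 3 * (X * Y ^ 2) := by
    nlinarith [mul_le_mul_of_nonneg_left hnum ha.le]
  rw [hremainder, abs_div, abs_of_pos hden, abs_mul, abs_of_nonneg (sq_nonneg h),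
    div_le_iff₀ hden, div_mul_eq_mul_div, div_mul_eq_mul_div, le_div_iff₀ (by positivity)]
  nlinarith [mul_le_mul_of_nonneg_left hnum' (sq_nonneg h)]

lemma abs_quotSq_div_sub_le {a s : ℝ} (ha : 0 < a) (hs : 1 ≤ s) (w : ℝ) :
    |quotSq a (w / s) - quotSq a w / s| ≤ (s ^ 2 - 1) / (2 * √a) := by
  have hs0 : 0 < s := one_pos.trans_le hs
  have hs2 : 0 ≤ s ^ 2 - 1 := by nlinarith
  set Y := a + w ^ 2
  have hY : 0 < Y := by positivity
  have hden : 0 < s * (a * s ^ 2 + w ^ 2) * Y := by positivity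
  have hdiff : quotSq a (w / s) - quotSq a w / s
      = w ^ 3 * (s ^ 2 - 1) / (s * (a * s ^ 2 + w ^ 2) * Y) := by
    unfold quotSq; field_simp; ring
  have hcube : |w| ^ 3 * (2 * √a) ≤ Y ^ 2 := by
    have := mul_le_mul_of_nonneg_right (abs_mul_two_sqrt_le a w ha.le) (sq_nonneg w)
    rw [pow_succ, sq_abs]
    nlinarith
  have hY_le : Y ≤ s * (a * s ^ 2 + w ^ 2) := by
    have : 1 ≤ s ^ 3 := one_le_pow₀ hs
    nlinarith [mul_nonneg ha.le (sub_nonneg.mpr this),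
      mul_nonneg (sq_nonneg w) (sub_nonneg.mpr hs)]
  rw [hdiff, abs_div, abs_of_pos hden, abs_mul, abs_of_nonneg hs2, abs_pow,
    div_le_div_iff₀ hden (by positivity)]
  calc |w| ^ 3 * (s ^ 2 - 1) * (2 * √a) = (s ^ 2 - 1) * (|w| ^ 3 * (2 * √a)) := by ring
    _ ≤ (s ^ 2 - 1) * (Y * Y) := by rw [← sq]; gcongr
    _ ≤ (s ^ 2 - 1) * (s * (a * s ^ 2 + w ^ 2) * Y) := by gcongr

section Residual

variable {n : ℕ} (A : Matrix (Fin n) (Fin n) ℝ) (Γ : ℝ) (a : Fin n → ℝ)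

lemma calA_mulVec_apply (u : Fin n → ℝ) (i : Fin n) :
    (calA A Γ a u *ᵥ u) i = (A *ᵥ u) i + Γ * u i - Γ * quotSq (a i) (u i) := by
  simp only [calA, add_mulVec, smul_mulVec, mulVec_diagonal, Pi.add_apply, Pi.smul_apply,
    smul_eq_mul, quotSq]
  ring

lemma rvec_apply (u : Fin n → ℝ) (lam : ℝ) (i : Fin n) :
    rvec A Γ a u lam i = (A *ᵥ u) i + (Γ - lam) * u i - Γ * quotSq (a i) (u i) := by
  simp only [rvec, Pi.sub_apply, Pi.smul_apply, smul_eq_mul, calA_mulVec_apply]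
  ring

lemma Jmat_mulVec_apply (u : Fin n → ℝ) (lam : ℝ) (Δ : Fin n → ℝ) (i : Fin n) :
    (Jmat A Γ a u lam *ᵥ Δ) i
      = (A *ᵥ Δ) i + (Γ - lam) * Δ i - Γ * (Δ i * ((a i - u i ^ 2) / (a i + u i ^ 2) ^ 2)) := by
  simp only [Jmat, sub_mulVec, add_mulVec, smul_mulVec, one_mulVec, mulVec_diagonal,
    Pi.sub_apply, Pi.add_apply, Pi.smul_apply, smul_eq_mul]
  ring

lemma rvec_smul_wvec_sub_apply {u Δ : Fin n → ℝ} {lam δ : ℝ}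
    (hJ : Jmat A Γ a u lam *ᵥ Δ - δ • u = -rvec A Γ a u lam) (θ s : ℝ) (i : Fin n) :
    (rvec A Γ a (s⁻¹ • wvec u Δ θ) lam - ((1 - θ) / s) • rvec A Γ a u lam
        - (θ * δ / s) • u) i
      = -Γ * (quotSq (a i) (wvec u Δ θ i / s) - quotSq (a i) (wvec u Δ θ i) / s)
        - Γ / s * (quotSq (a i) (u i + θ * Δ i) - quotSq (a i) (u i)
          - θ * Δ i * ((a i - u i ^ 2) / (a i + u i ^ 2) ^ 2)) := by
  have hJi := congrFun hJ i
  simp only [Pi.sub_apply, Pi.smul_apply, Pi.neg_apply, smul_eq_mul, Jmat_mulVec_apply,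
    rvec_apply] at hJi ⊢
  simp only [wvec, mulVec_smul, mulVec_add, Pi.add_apply, Pi.smul_apply, smul_eq_mul,
    ← div_eq_inv_mul]
  linear_combination (θ / s) * hJi

end Residual

section Norms

variable {n : ℕ}

lemma euclNorm_sq (u : Fin n → ℝ) : euclNorm u ^ 2 = u ⬝ᵥ u := by
  rw [euclNorm, Real.sq_sqrt (by positivity), dotProduct]
  simp only [sq]

lemma abs_le_euclNorm (u : Fin n → ℝ) (i : Fin n) : |u i| ≤ euclNorm u :=
  Real.abs_le_sqrt (single_le_sum (fun j _ => sq_nonneg (u j)) (mem_univ i))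

lemma euclNorm_le_sum_abs (u : Fin n → ℝ) : euclNorm u ≤ ∑ i, |u i| := by
  refine Real.sqrt_le_iff.mpr ⟨by positivity, ?_⟩
  simpa only [sq_abs] using sum_sq_le_sq_sum_of_nonneg (s := univ)
    (f := fun i => |u i|) (fun i _ => abs_nonneg (u i))

lemma euclNorm_wvec_sq {u Δ : Fin n → ℝ} (h : u ⬝ᵥ Δ = 0) (θ : ℝ) :
    euclNorm (wvec u Δ θ) ^ 2 = euclNorm u ^ 2 + θ ^ 2 * euclNorm Δ ^ 2 := by
  simp only [euclNorm_sq, wvec, dotProduct_add, add_dotProduct, dotProduct_smul,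
    smul_dotProduct, dotProduct_comm Δ u, h, smul_eq_mul]
  ring

lemma NewtonSystem.dotProduct_eq_zero {A : Matrix (Fin n) (Fin n) ℝ} {Γ lam δ : ℝ}
    {a u Δ : Fin n → ℝ} (hN : NewtonSystem A Γ a u lam Δ δ) (hu : euclNorm u = 1) :
    u ⬝ᵥ Δ = 0 := by
  have := hN.2
  rw [← euclNorm_sq, hu] at this
  linarith

end Norms

lemma abs_newtonStep_residual_apply_le {n : ℕ} {A : Matrix (Fin n) (Fin n) ℝ} {Γ lam δ : ℝ}
    {a u Δ : Fin n → ℝ} (hN : NewtonSystem A Γ a u lam Δ δ) (hu : euclNorm u = 1) (θ : ℝ)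
    {i : Fin n} (hai : 0 < a i) :
    |(rvec A Γ a (unext u Δ θ) lam - ((1 - θ) / euclNorm (wvec u Δ θ)) • rvec A Γ a u lam
        - (θ * δ / euclNorm (wvec u Δ θ)) • u) i|
      ≤ |Γ| * (1 / (2 * √(a i)) + 3 / (a i * √(a i))) * (θ ^ 2 * euclNorm Δ ^ 2) := by
  set s := euclNorm (wvec u Δ θ)
  have hs2 : s ^ 2 = 1 + θ ^ 2 * euclNorm Δ ^ 2 := by
    rw [euclNorm_wvec_sq (hN.dotProduct_eq_zero hu), hu, one_pow]
  have hs : 1 ≤ s := by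
    have : 0 ≤ s := Real.sqrt_nonneg _
    nlinarith [sq_nonneg (θ * euclNorm Δ)]
  have hΔi : (θ * Δ i) ^ 2 ≤ θ ^ 2 * euclNorm Δ ^ 2 := by
    rw [mul_pow]
    exact mul_le_mul_of_nonneg_left (sq_le_sq' (abs_le.mp (abs_le_euclNorm Δ i)).1
      (abs_le.mp (abs_le_euclNorm Δ i)).2) (sq_nonneg θ)
  have hnormalise := abs_quotSq_div_sub_le hai hs (wvec u Δ θ i)
  have htaylor := abs_quotSq_add_sub_sub_le hai (u i) (θ * Δ i)
  rw [unext, rvec_smul_wvec_sub_apply A Γ a hN.1]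
  set X := quotSq (a i) (wvec u Δ θ i / s) - quotSq (a i) (wvec u Δ θ i) / s
  set Y := quotSq (a i) (u i + θ * Δ i) - quotSq (a i) (u i)
    - θ * Δ i * ((a i - u i ^ 2) / (a i + u i ^ 2) ^ 2)
  have hY : |Γ / s * Y| ≤ |Γ| * |Y| := by
    rw [abs_mul, abs_div, abs_of_pos (one_pos.trans_le hs)]
    gcongr
    exact div_le_self (abs_nonneg Γ) hs
  calc |-Γ * X - Γ / s * Y| ≤ |-Γ * X| + |Γ / s * Y| := abs_sub _ _
    _ ≤ |Γ| * ((s ^ 2 - 1) / (2 * √(a i)))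
          + |Γ| * (3 / (a i * √(a i)) * (θ ^ 2 * euclNorm Δ ^ 2)) := by
      rw [abs_mul, abs_neg]
      gcongr
      exact hY.trans (by gcongr; exact htaylor.trans (by gcongr))
    _ = _ := by rw [hs2]; ring

lemma lamOf_sub_eq_iInf {n : ℕ} [NeZero n] (A : Matrix (Fin n) (Fin n) ℝ) (Γ : ℝ)
    (a : Fin n → ℝ) {v : Fin n → ℝ} (hv : ∀ i, v i ≠ 0) (μ : ℝ) :
    lamOf A Γ a v - μ = ⨅ i, rvec A Γ a v μ i / v i := by
  rw [lamOf, ciInf_sub (Set.finite_range _).bddBelow]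
  congr 1 with i
  rw [rvec, Pi.sub_apply, Pi.smul_apply, smul_eq_mul, sub_div, mul_div_cancel_right₀ _ (hv i)]

theorem stmt_9_general {n : ℕ} [NeZero n] (A : Matrix (Fin n) (Fin n) ℝ) (a : Fin n → ℝ) (Γ : ℝ)
    (ha : ∀ i, 0 < a i) :
    ∃ M : ℝ, 0 < M ∧
      ∀ (u : Fin n → ℝ) (lam : ℝ) (Δ : Fin n → ℝ) (δ : ℝ) (θ : ℝ),
        (∀ i, 0 < u i) → euclNorm u = 1 →
        NewtonSystem A Γ a u lam Δ δ →
        0 < θ → θ ≤ 1 → wvec u Δ θ ≠ 0 →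
        euclNorm (rvec A Γ a (unext u Δ θ) lam
            - ((1 - θ) / euclNorm (wvec u Δ θ)) • rvec A Γ a u lam
            - (θ * δ / euclNorm (wvec u Δ θ)) • u) ≤ M * θ ^ 2 * euclNorm Δ ^ 2 ∧
        ((∀ i, 0 < unext u Δ θ i) →
          lamOf A Γ a (unext u Δ θ) - lamOf A Γ a u =
            ⨅ i, rvec A Γ a (unext u Δ θ) (lamOf A Γ a u) i / unext u Δ θ i) := by
  set C := ∑ i, (1 / (2 * √(a i)) + 3 / (a i * √(a i)))
  have hC : 0 ≤ C := sum_nonneg fun i _ => by have := ha i; positivity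
  refine ⟨|Γ| * C + 1, by positivity, fun u lam Δ δ θ _ hu hN _ _ _ => ⟨?_, fun hv =>
    lamOf_sub_eq_iInf A Γ a (fun i => (hv i).ne') _⟩⟩
  calc _ ≤ ∑ i, |Γ| * (1 / (2 * √(a i)) + 3 / (a i * √(a i))) * (θ ^ 2 * euclNorm Δ ^ 2) :=
        (euclNorm_le_sum_abs _).trans
          (sum_le_sum fun i _ => abs_newtonStep_residual_apply_le hN hu θ (ha i))
    _ = |Γ| * C * (θ ^ 2 * euclNorm Δ ^ 2) := by rw [← sum_mul, ← mul_sum]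
    _ ≤ (|Γ| * C + 1) * (θ ^ 2 * euclNorm Δ ^ 2) := by gcongr; linarith
    _ = (|Γ| * C + 1) * θ ^ 2 * euclNorm Δ ^ 2 := by ring

theorem stmt_9 {n : ℕ} [NeZero n] (A : Matrix (Fin n) (Fin n) ℝ) (a : Fin n → ℝ) (Γ : ℝ)
    (ha : ∀ i, 0 < a i) (hΓ : 0 < Γ)
    (hA : IsNonsingularM A) (hAirr : IsIrreducibleMat A) :
    ∃ M : ℝ, 0 < M ∧
      ∀ (u : Fin n → ℝ) (lam : ℝ) (Δ : Fin n → ℝ) (δ : ℝ) (θ : ℝ),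
        (∀ i, 0 < u i) → euclNorm u = 1 →
        NewtonSystem A Γ a u lam Δ δ →
        0 < θ → θ ≤ 1 → wvec u Δ θ ≠ 0 →
        euclNorm (rvec A Γ a (unext u Δ θ) lam
            - ((1 - θ) / euclNorm (wvec u Δ θ)) • rvec A Γ a u lam
            - (θ * δ / euclNorm (wvec u Δ θ)) • u) ≤ M * θ ^ 2 * euclNorm Δ ^ 2 ∧
        ((∀ i, 0 < unext u Δ θ i) →
          lamOf A Γ a (unext u Δ θ) - lamOf A Γ a u =
            ⨅ i, rvec A Γ a (unext u Δ θ) (lamOf A Γ a u) i / unext u Δ θ i) :=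
  stmt_9_general A a Γ ha
end

section
/- Let (u_k)_{k∈ℕ} be a sequence of vectors in ℝ^n with u_k > 0 entrywise and ‖u_k‖ = 1 for all k, and suppose there exists c ∈ ℝ with λ(u_k) ≥ c for all k. Then there exists m > 0 such that min_i (u_k)_i ≥ m for all k. -/
open Matrix Finset

noncomputable def enormVec {n : ℕ} (u : Fin n → ℝ) : ℝ := Real.sqrt (∑ i, u i ^ 2)

/-! If `λ(u) ≥ c`, then, as `Γ (1 - 1/(a_i + u_i²)) ≤ Γ`, we get `(A u)_i ≥ (c - Γ) u_i`. Since
`A` is a Z-matrix, row `i` then controls each off-diagonal entry: `-A_ij u_j ≤ (A_ii + Γ - c) u_i`,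
so `u_i ≥ r u_j` whenever `A_ij ≠ 0`, with one `r > 0` for all `u`. By irreducibility every index
is reached from any other along at most `n - 1` such edges, hence every coordinate is at least
`r^(n-1)` times the largest one, which is at least `1/√n` because `‖u‖ = 1`. -/

open Filter Topology

variable {n : ℕ}

theorem exists_inv_sqrt_le_abs_of_enormVec_eq_one {u : Fin n → ℝ} (h : enormVec u = 1) :
    ∃ i, (Real.sqrt n)⁻¹ ≤ |u i| := by
  have hsum : ∑ i, u i ^ 2 = 1 := Real.sqrt_eq_one.mp h
  have hn : n ≠ 0 := by
    rintro rfl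
    simp at hsum
  have hmean : ∑ _i : Fin n, (n : ℝ)⁻¹ ≤ ∑ i, u i ^ 2 := by
    simp [hsum, hn]
  have : NeZero n := ⟨hn⟩
  obtain ⟨i, -, hi⟩ := exists_le_of_sum_le univ_nonempty hmean
  exact ⟨i, by simpa [Real.sqrt_inv, Real.sqrt_sq_eq_abs] using Real.sqrt_le_sqrt hi⟩

theorem IsIrreducibleMat.exists_ne_zero {B : Matrix (Fin n) (Fin n) ℝ} (hB : IsIrreducibleMat B)
    {S : Finset (Fin n)} (hS : S.Nonempty) (hS' : S ≠ univ) : ∃ i ∉ S, ∃ j ∈ S, B i j ≠ 0 := by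
  by_contra! h
  refine hB ⟨Sᶜ, by simpa [nonempty_iff_ne_empty] using hS', (compl_ne_univ_iff_nonempty S).mpr hS,
    fun i hi j hj => ?_⟩
  exact h i (by simpa using hi) j (by simpa using hj)

theorem IsIrreducibleMat.pow_mul_le {B : Matrix (Fin n) (Fin n) ℝ} (hB : IsIrreducibleMat B)
    {v : Fin n → ℝ} {r m : ℝ} (hr₀ : 0 ≤ r) (hr₁ : r ≤ 1) (hm : 0 ≤ m)
    (hv : ∀ i j, i ≠ j → B i j ≠ 0 → r * v j ≤ v i) {i₀ : Fin n} (hi₀ : m ≤ v i₀) (i : Fin n) :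
    r ^ (n - 1) * m ≤ v i := by
  set S : ℕ → Finset (Fin n) := fun t => {i | r ^ t * m ≤ v i} with hS
  have hi₀S : ∀ t, i₀ ∈ S t := fun t => by
    simpa [hS] using (mul_le_of_le_one_left hm (pow_le_one₀ hr₀ hr₁)).trans hi₀
  have hmono : ∀ t, S t ⊆ S (t + 1) := fun t j hj => by
    simp only [hS, mem_filter, mem_univ, true_and] at hj ⊢
    exact le_trans (mul_le_mul_of_nonneg_right (pow_le_pow_of_le_one hr₀ hr₁ t.le_succ) hm) hj
  have hcard : ∀ t, min (t + 1) n ≤ #(S t) := by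
    intro t
    induction t with
    | zero => exact (min_le_left _ _).trans (card_pos.mpr ⟨i₀, hi₀S 0⟩)
    | succ t ih =>
      by_cases htop : S t = univ
      · have := eq_univ_of_forall fun j => hmono t (htop ▸ mem_univ j)
        simp [this]
      obtain ⟨i, hi, j, hj, hij⟩ := hB.exists_ne_zero ⟨i₀, hi₀S t⟩ htop
      have hiS : i ∈ S (t + 1) := by
        have hj' : r ^ t * m ≤ v j := by simpa [hS] using hj
        simp only [hS, mem_filter, mem_univ, true_and]
        calc r ^ (t + 1) * m = r * (r ^ t * m) := by ring
          _ ≤ r * v j := by gcongr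
          _ ≤ v i := hv i j (fun h => hi (h ▸ hj)) hij
      have := card_le_card (insert_subset hiS (hmono t))
      rw [card_insert_of_notMem hi] at this
      omega
  have htop : S (n - 1) = univ := eq_univ_of_card _ <| by
    have := hcard (n - 1)
    have := card_le_univ (S (n - 1))
    simp only [Fintype.card_fin] at *
    omega
  have hi : i ∈ S (n - 1) := htop ▸ mem_univ i
  simpa [hS] using hi

theorem IsZMatrix.neg_mul_le {B : Matrix (Fin n) (Fin n) ℝ} (hB : IsZMatrix B) {v : Fin n → ℝ}
    (hv : 0 ≤ v) {i j : Fin n} (hij : i ≠ j) : -B i j * v j ≤ B i i * v i - (B *ᵥ v) i := by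
  have hsplit := add_sum_erase univ (fun k => B i k * v k) (mem_univ i)
  have hoff : -B i j * v j ≤ ∑ k ∈ univ.erase i, -(B i k * v k) :=
    le_of_eq_of_le (neg_mul _ _) <| single_le_sum (f := fun k => -(B i k * v k))
      (fun k hk => neg_nonneg.mpr (mul_nonpos_of_nonpos_of_nonneg
        (hB i k (ne_of_mem_erase hk).symm) (hv k))) (mem_erase.mpr ⟨hij.symm, mem_univ j⟩)
  rw [sum_neg_distrib] at hoff
  simp only [mulVec, dotProduct]
  linarith

theorem IsZMatrix.exists_mul_le_of_le_mulVec {B : Matrix (Fin n) (Fin n) ℝ} (hB : IsZMatrix B)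
    (d : ℝ) : ∃ r, 0 < r ∧ r ≤ 1 ∧ ∀ v : Fin n → ℝ, 0 ≤ v → (∀ i, d * v i ≤ (B *ᵥ v) i) →
      ∀ i j, i ≠ j → B i j ≠ 0 → r * v j ≤ v i := by
  have hsmall : ∀ p : Fin n × Fin n, ∀ᶠ r in 𝓝[>] (0 : ℝ),
      p.1 ≠ p.2 → B p.1 p.2 ≠ 0 → r * (B p.1 p.1 - d) ≤ -B p.1 p.2 := by
    rintro ⟨i, j⟩
    by_cases hij : i ≠ j ∧ B i j ≠ 0
    · have hneg : 0 < -B i j := neg_pos.mpr ((hB i j hij.1).lt_of_ne hij.2)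
      have hlim : Tendsto (fun r : ℝ => r * (B i i - d)) (𝓝 0) (𝓝 0) := by
        simpa using (continuous_mul_const (B i i - d)).tendsto 0
      exact nhdsWithin_le_nhds <|
        (hlim.eventually (eventually_le_nhds hneg)).mono fun _ h _ _ => h
    · exact Eventually.of_forall fun _ h₁ h₂ => absurd ⟨h₁, h₂⟩ hij
  obtain ⟨r, hr, hr₀ : 0 < r, hr₁⟩ := ((eventually_all.mpr hsmall).and
    (eventually_mem_nhdsWithin.and
      (eventually_nhdsWithin_of_eventually_nhds (eventually_le_nhds one_pos)))).exists
  refine ⟨r, hr₀, hr₁, fun v hv hd i j hij hBij => ?_⟩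
  have hneg : 0 < -B i j := neg_pos.mpr ((hB i j hij).lt_of_ne hBij)
  have hrow : -B i j * v j ≤ (B i i - d) * v i := by
    linarith [hB.neg_mul_le hv hij, hd i]
  refine le_of_mul_le_mul_left ?_ hneg
  calc -B i j * (r * v j) = r * (-B i j * v j) := by ring
    _ ≤ r * ((B i i - d) * v i) := by gcongr
    _ = r * (B i i - d) * v i := by ring
    _ ≤ -B i j * v i := mul_le_mul_of_nonneg_right (hr (i, j) hij hBij) (hv i)

theorem calA_mulVec_le (A : Matrix (Fin n) (Fin n) ℝ) {Γ : ℝ} {a u : Fin n → ℝ} {i : Fin n}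
    (ha : 0 ≤ a i) (hΓ : 0 ≤ Γ) (hu : 0 ≤ u i) :
    (calA A Γ a u *ᵥ u) i ≤ (A *ᵥ u) i + Γ * u i := by
  have hfrac : 0 ≤ 1 / (a i + u i ^ 2) := by positivity
  simp only [calA, add_mulVec, smul_mulVec, mulVec_diagonal, Pi.add_apply, Pi.smul_apply,
    smul_eq_mul]
  gcongr
  nlinarith

theorem lamOf_mul_le [NeZero n] (A : Matrix (Fin n) (Fin n) ℝ) (Γ : ℝ) (a : Fin n → ℝ)
    {u : Fin n → ℝ} {i : Fin n} (hu : 0 < u i) : lamOf A Γ a u * u i ≤ (calA A Γ a u *ᵥ u) i :=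
  (le_div_iff₀ hu).mp (ciInf_le (Finite.bddBelow_range _) i)

theorem stmt_13 {n : ℕ} [NeZero n] (A : Matrix (Fin n) (Fin n) ℝ) (a : Fin n → ℝ) (Γ : ℝ)
    (ha : ∀ i, 0 < a i) (hΓ : 0 < Γ)
    (hA : IsNonsingularM A) (hAirr : IsIrreducibleMat A)
    (u : ℕ → Fin n → ℝ)
    (hu : ∀ k, ∀ i, 0 < u k i) (hnorm : ∀ k, enormVec (u k) = 1)
    (c : ℝ) (hc : ∀ k, c ≤ lamOf A Γ a (u k)) :
    ∃ m : ℝ, 0 < m ∧ ∀ k i, m ≤ u k i := by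
  obtain ⟨r, hr₀, hr₁, hedge⟩ := hA.1.exists_mul_le_of_le_mulVec (c - Γ)
  have hn : (0 : ℝ) < n := mod_cast NeZero.pos n
  refine ⟨r ^ (n - 1) * (Real.sqrt n)⁻¹, by positivity, fun k i => ?_⟩
  have hpos := hu k
  obtain ⟨i₀, hi₀⟩ := exists_inv_sqrt_le_abs_of_enormVec_eq_one (hnorm k)
  rw [abs_of_pos (hpos i₀)] at hi₀
  have hlower : ∀ i, (c - Γ) * u k i ≤ (A *ᵥ u k) i := fun i => by
    have := mul_le_mul_of_nonneg_right (hc k) (hpos i).le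
    linarith [lamOf_mul_le A Γ a (hpos i), calA_mulVec_le A (ha i).le hΓ.le (hpos i).le]
  exact hAirr.pow_mul_le hr₀.le hr₁ (by positivity)
    (hedge _ (fun j => (hpos j).le) hlower) hi₀ i
end
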